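/- Abstract structure theorem (Theorem 2 of the paper, module-theoretic core): Let p be a prime, H = ⟨σ⟩ cyclic of order p, M an 𝔽_p[H]-module, A an 𝔽_p-vector space, c: M → A surjective 𝔽_p-linear, r: A → M 𝔽_p-linear, with r∘c = (σ−1)^{p−1} on M, c(σm) = c(m) for all m, ker c = (σ−1)M, and suppose there is a trivial 𝔽_p[H]-submodule X of M such that c restricts to an isomorphism X ≅ ker r. Then M = X ⊕ Y as 𝔽_p[H]-modules, where Y is a (maximal) free 𝔽_p[H]-submodule of M, dim_{𝔽_p} X = dim_{𝔽_p} ker r, and rank_{𝔽_p[H]} Y = dim_{𝔽_p} (A / ker r) (when these are finite, dim_{𝔽_p} M = dim ker r + p·dim(A/ker r)). -/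

import Mathlib

/-- The group algebra `𝔽_p[H]` for `H` the cyclic group of order `p`, generated by `σ`. -/
abbrev Sp (p : ℕ) : Type := MonoidAlgebra (ZMod p) (Multiplicative (ZMod p))

/-- The generator `σ` of the cyclic group `H`, as an element of the group algebra. -/
noncomputable def sigma (p : ℕ) : Sp p :=
  MonoidAlgebra.of (ZMod p) (Multiplicative (ZMod p)) (Multiplicative.ofAdd 1)

/-- Scalar multiplication by `s ∈ 𝔽_p[H]` as an `𝔽_p`-linear endomorphism. -/
noncomputable def smulMap (p : ℕ) (M : Type*) [AddCommGroup M] [Module (Sp p) M]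
    [Module (ZMod p) M] [IsScalarTower (ZMod p) (Sp p) M] (s : Sp p) :
    M →ₗ[ZMod p] M :=
  (LinearMap.lsmul (Sp p) M s).restrictScalars (ZMod p)
universe u

/-! Write `t = σ - 1`. In `𝔽_p[H]` one has `t ^ p = 0`, and `t ^ (p - 1) * g = ε g • t ^ (p - 1)`
for the augmentation `ε`, whose kernel is `t 𝔽_p[H]`. Hence lifts along `t ^ (p - 1)` of an
`𝔽_p`-basis of `t ^ (p - 1) M = r A` are `𝔽_p[H]`-independent: they span a free `Y` with
`t ^ (p - 1) Y = t ^ (p - 1) M`, of rank `dim r A = dim (A ⧸ ker r)`.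

If `t ^ (p - 1) m = 0` then `c m ∈ ker r = c X`, so `m ∈ X + t M`. Thus `M = X + Y + t M`, and
as `t X = 0`, descending induction on `k` gives `t ^ k M ⊆ Y` for `k ≥ 1`, whence `M = X + Y`.
On the other hand, the `σ`-fixed vectors of a free module `Z` lie in `t Z ⊆ t M = ker c`, while
`c` is injective on `X`; so `X` meets every free submodule trivially. This gives `X ∩ Y = 0` and
the maximality of `Y`. -/

lemma LinearMap.rank_eq_of_bijOn {R : Type*} {M N : Type u} [Ring R] [AddCommGroup M]
    [Module R M] [AddCommGroup N] [Module R N] {f : M →ₗ[R] N} {P : Submodule R M}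
    {Q : Submodule R N} (h : Set.BijOn f P Q) : Module.rank R P = Module.rank R Q := by
  let g : P →ₗ[R] Q := (f.domRestrict P).codRestrict Q fun x => h.mapsTo x.2
  refine (LinearEquiv.ofBijective g ⟨fun x y hxy => ?_, fun y => ?_⟩).rank_eq
  · exact Subtype.ext (h.injOn x.2 y.2 congr(($hxy : N)))
  · obtain ⟨x, hx, hxy⟩ := h.surjOn y.2
    exact ⟨⟨x, hx⟩, Subtype.ext hxy⟩

open MonoidAlgebra

section GroupAlgebra

variable {p : ℕ}

lemma sigma_pow (n : ℕ) :
    sigma p ^ n = of (ZMod p) _ (Multiplicative.ofAdd (n : ZMod p)) := by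
  rw [sigma, ← map_pow, ← ofAdd_nsmul, nsmul_one]

lemma of_eq_sigma_pow [NeZero p] (h : Multiplicative (ZMod p)) :
    of (ZMod p) _ h = sigma p ^ h.toAdd.val := by
  rw [sigma_pow, ZMod.natCast_zmod_val, ofAdd_toAdd]

lemma sigma_pow_self : sigma p ^ p = 1 := by
  rw [sigma_pow, ZMod.natCast_self, ofAdd_zero, map_one]

lemma sigma_sub_one_pow_self [Fact p.Prime] : (sigma p - 1) ^ p = 0 := by
  have : CharP (Sp p) p := charP_of_injective_algebraMap' (ZMod p) p
  have : ExpChar (Sp p) p := ExpChar.prime Fact.out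
  rw [sub_pow_char, sigma_pow_self, one_pow, sub_self]

variable (p) in
noncomputable def augmentation : Sp p →ₐ[ZMod p] ZMod p :=
  lift (ZMod p) (ZMod p) (Multiplicative (ZMod p)) 1

@[simp]
lemma augmentation_of (h : Multiplicative (ZMod p)) : augmentation p (of (ZMod p) _ h) = 1 :=
  lift_of _ _

lemma sigma_sub_one_dvd_sub_augmentation [NeZero p] (g : Sp p) :
    sigma p - 1 ∣ g - algebraMap (ZMod p) (Sp p) (augmentation p g) := by
  induction g using MonoidAlgebra.induction_on with
  | of h =>
    rw [augmentation_of, map_one, of_eq_sigma_pow h]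
    simpa using sub_dvd_pow_sub_pow (sigma p) 1 h.toAdd.val
  | add x y hx hy => simpa only [map_add, add_sub_add_comm] using dvd_add hx hy
  | smul a x hx =>
    rw [map_smul, smul_eq_mul, map_mul, Algebra.smul_def, ← mul_sub]
    exact hx.mul_left _

lemma sigma_sub_one_dvd_of_augmentation_eq_zero [NeZero p] {g : Sp p}
    (hg : augmentation p g = 0) : sigma p - 1 ∣ g := by
  simpa [hg] using sigma_sub_one_dvd_sub_augmentation g

lemma sigma_sub_one_pow_pred_mul [Fact p.Prime] (g : Sp p) :
    (sigma p - 1) ^ (p - 1) * g = augmentation p g • (sigma p - 1) ^ (p - 1) := by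
  obtain ⟨h, hh⟩ := sigma_sub_one_dvd_sub_augmentation g
  rw [sub_eq_iff_eq_add] at hh
  conv_lhs => rw [hh]
  rw [mul_add, ← mul_assoc, ← pow_succ, Nat.sub_add_cancel (Fact.out : p.Prime).one_le,
    sigma_sub_one_pow_self, zero_mul, zero_add, Algebra.smul_def, mul_comm]

lemma augmentation_eq_zero_of_sigma_mul_eq [NeZero p] {g : Sp p} (hg : sigma p * g = g) :
    augmentation p g = 0 := by
  have hsucc (n : ℕ) :
      g.coeff (.ofAdd ((n + 1 : ℕ) : ZMod p)) = g.coeff (.ofAdd (n : ZMod p)) := by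
    conv_lhs => rw [← hg]
    simp [sigma, of_apply, ← ofAdd_neg, ← ofAdd_add]
  have hconst (h : Multiplicative (ZMod p)) : g.coeff h = g.coeff 1 := by
    suffices ∀ n : ℕ, g.coeff (.ofAdd (n : ZMod p)) = g.coeff 1 by
      simpa using this h.toAdd.val
    intro n
    induction n with
    | zero => simp
    | succ n ih => rw [hsucc, ih]
  rw [augmentation, lift_apply, Finsupp.sum_fintype _ _ (by simp)]
  simp [hconst]

end GroupAlgebra

section Modules

variable {p : ℕ} {M : Type*} [AddCommGroup M] [Module (Sp p) M]

lemma exists_eq_sigma_sub_one_smul_of_free [NeZero p] [Module.Free (Sp p) M] {x : M}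
    (hx : sigma p • x = x) : ∃ u : M, x = (sigma p - 1) • u := by
  let B := Module.Free.chooseBasis (Sp p) M
  have hdvd (k) : sigma p - 1 ∣ B.repr x k := by
    refine sigma_sub_one_dvd_of_augmentation_eq_zero (augmentation_eq_zero_of_sigma_mul_eq ?_)
    simpa using congr(B.repr $hx k)
  choose h hh using hdvd
  refine ⟨∑ k ∈ (B.repr x).support, h k • B k, ?_⟩
  conv_lhs => rw [← B.linearCombination_repr x, Finsupp.linearCombination_apply, Finsupp.sum]
  simp only [Finset.smul_sum, smul_smul, ← hh]

lemma disjoint_of_free [NeZero p] {X : Submodule (Sp p) M} (hX : ∀ x ∈ X, sigma p • x = x)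
    (hXt : ∀ x ∈ X, ∀ m : M, x = (sigma p - 1) • m → x = 0)
    (Z : Submodule (Sp p) M) [Module.Free (Sp p) Z] : Disjoint X Z := by
  refine Submodule.disjoint_def.2 fun x hxX hxZ => ?_
  obtain ⟨u, hu⟩ := exists_eq_sigma_sub_one_smul_of_free (p := p) (x := (⟨x, hxZ⟩ : Z))
    (Subtype.ext (hX x hxX))
  exact hXt x hxX u congr(($hu : M))

lemma sigma_sub_one_smul_mem_of_forall_eq_add [Fact p.Prime] {X : Set M}
    {Y : Submodule (Sp p) M} (hX : ∀ x ∈ X, (sigma p - 1) • x = 0)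
    (h : ∀ m : M, ∃ x ∈ X, ∃ z ∈ Y, ∃ m', m = x + z + (sigma p - 1) • m') (m : M) :
    (sigma p - 1) • m ∈ Y := by
  have hp : 1 ≤ p := (Fact.out : p.Prime).one_le
  suffices ∀ k ≤ p - 1, ∀ m : M, (sigma p - 1) ^ k • (sigma p - 1) • m ∈ Y by
    simpa using this 0 (Nat.zero_le _) m
  refine fun k hk => Nat.decreasingInduction
    (motive := fun k _ => ∀ m : M, (sigma p - 1) ^ k • (sigma p - 1) • m ∈ Y)
    (fun k _ ih m => ?_) (fun m => ?_) hk
  · obtain ⟨x, hx, z, hz, m', rfl⟩ := h m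
    rw [smul_add, smul_add, smul_add, smul_add, hX x hx, smul_zero, zero_add]
    exact add_mem (Y.smul_mem _ (Y.smul_mem _ hz))
      (by simpa only [pow_succ, mul_smul] using ih m')
  · rw [smul_smul, ← pow_succ, Nat.sub_add_cancel hp, sigma_sub_one_pow_self, zero_smul]
    exact Y.zero_mem

lemma codisjoint_of_forall_pow_pred_smul_eq [Fact p.Prime] {X Y : Submodule (Sp p) M}
    (hX : ∀ x ∈ X, (sigma p - 1) • x = 0)
    (hY : ∀ m : M, ∃ z ∈ Y, (sigma p - 1) ^ (p - 1) • z = (sigma p - 1) ^ (p - 1) • m)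
    (hdecomp : ∀ m : M, (sigma p - 1) ^ (p - 1) • m = 0 →
      ∃ x ∈ X, ∃ m', m = x + (sigma p - 1) • m') :
    Codisjoint X Y := by
  have h (m : M) : ∃ x ∈ X, ∃ z ∈ Y, ∃ m', m = x + z + (sigma p - 1) • m' := by
    obtain ⟨z, hz, hzm⟩ := hY m
    obtain ⟨x, hx, m', hm'⟩ := hdecomp (m - z) (by rw [smul_sub, hzm, sub_self])
    exact ⟨x, hx, z, hz, m', by rw [add_right_comm, ← hm', sub_add_cancel]⟩
  refine codisjoint_iff.2 (eq_top_iff.2 fun m _ => ?_)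
  obtain ⟨x, hx, z, hz, m', rfl⟩ := h m
  exact add_mem (add_mem (Submodule.mem_sup_left hx) (Submodule.mem_sup_right hz))
    (Submodule.mem_sup_right (sigma_sub_one_smul_mem_of_forall_eq_add (X := X) hX h m'))

variable [Module (ZMod p) M] [IsScalarTower (ZMod p) (Sp p) M]

@[simp]
lemma smulMap_apply (s : Sp p) (m : M) : smulMap p M s m = s • m := rfl

lemma linearIndependent_of_linearIndependent_pow_pred_smul [Fact p.Prime] {ι : Type*}
    {y : ι → M} (hy : LinearIndependent (ZMod p) fun i => (sigma p - 1) ^ (p - 1) • y i) :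
    LinearIndependent (Sp p) y := by
  rw [linearIndependent_iff'] at hy ⊢
  intro s f hrel
  suffices h : ∀ k ≤ p, ∀ i ∈ s, (sigma p - 1) ^ k ∣ f i by
    intro i hi
    simpa [sigma_sub_one_pow_self] using h p le_rfl i hi
  intro k hk
  induction k with
  | zero => simp
  | succ k ih =>
    choose! g hg using ih (by omega)
    have hrel' : ∑ i ∈ s, augmentation p (g i) • (sigma p - 1) ^ (p - 1) • y i = 0 := by
      rw [← smul_zero ((sigma p - 1) ^ (p - 1 - k)), ← hrel, Finset.smul_sum]
      refine Finset.sum_congr rfl fun i hi => ?_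
      rw [hg i hi, smul_smul, ← mul_assoc, ← pow_add, Nat.sub_add_cancel (by omega),
        sigma_sub_one_pow_pred_mul, smul_assoc]
    intro i hi
    obtain ⟨h, hh⟩ := sigma_sub_one_dvd_of_augmentation_eq_zero (hy s _ hrel' i hi)
    exact ⟨h, by rw [hg i hi, hh, ← mul_assoc, ← pow_succ]⟩

lemma exists_free_submodule_pow_pred_smul_eq [Fact p.Prime] :
    ∃ Y : Submodule (Sp p) M, Module.Free (Sp p) Y ∧
      Module.rank (Sp p) Y =
        Module.rank (ZMod p) (LinearMap.range (smulMap p M ((sigma p - 1) ^ (p - 1)))) ∧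
      ∀ m : M, ∃ z ∈ Y, (sigma p - 1) ^ (p - 1) • z = (sigma p - 1) ^ (p - 1) • m := by
  set T := LinearMap.range (smulMap p M ((sigma p - 1) ^ (p - 1)))
  let b := Module.Basis.ofVectorSpace (ZMod p) T
  choose y hy using fun i => (b i).2
  have hli : LinearIndependent (Sp p) y := by
    refine linearIndependent_of_linearIndependent_pow_pred_smul ?_
    rw [show (fun i => (sigma p - 1) ^ (p - 1) • y i) = T.subtype ∘ b from funext hy]
    exact b.linearIndependent.map' T.subtype T.ker_subtype
  have hT : T = (Submodule.span (ZMod p) (Set.range y)).map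
      (smulMap p M ((sigma p - 1) ^ (p - 1))) := by
    rw [Submodule.map_span, ← Set.range_comp]
    conv_lhs => rw [← T.map_subtype_top, ← b.span_eq, Submodule.map_span, ← Set.range_comp]
    congr 2
    funext i
    exact (hy i).symm
  refine ⟨Submodule.span (Sp p) (Set.range y), .of_basis (.span hli),
    (Module.Basis.span hli).mk_eq_rank''.symm.trans b.mk_eq_rank'', fun m => ?_⟩
  obtain ⟨z, hz, hzm⟩ := hT.le (LinearMap.mem_range_self _ m)
  exact ⟨z, Submodule.span_le_restrictScalars (ZMod p) _ _ hz, hzm⟩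

lemma exists_eq_add_sigma_sub_one_smul {A : Type*} [AddCommGroup A] [Module (ZMod p) A]
    {c : M →ₗ[ZMod p] A} {r : A →ₗ[ZMod p] M}
    (hrc : ∀ m : M, r (c m) = (sigma p - 1) ^ (p - 1) • m)
    (hker : LinearMap.ker c = LinearMap.range (smulMap p M (sigma p - 1))) {X : Set M}
    (hX : Set.SurjOn c X (LinearMap.ker r)) {m : M} (hm : (sigma p - 1) ^ (p - 1) • m = 0) :
    ∃ x ∈ X, ∃ m', m = x + (sigma p - 1) • m' := by
  obtain ⟨x, hx, hcx⟩ := hX (show c m ∈ LinearMap.ker r by rw [LinearMap.mem_ker, hrc, hm])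
  obtain ⟨m', hm'⟩ : m - x ∈ LinearMap.range (smulMap p M (sigma p - 1)) := by
    rw [← hker, LinearMap.mem_ker, map_sub, hcx, sub_self]
  exact ⟨x, hx, m', by rw [← smulMap_apply, hm', add_sub_cancel]⟩

end Modules

theorem stmt15_general (p : ℕ) [Fact p.Prime]
    (M A : Type u) [AddCommGroup M] [Module (Sp p) M]
    [Module (ZMod p) M] [IsScalarTower (ZMod p) (Sp p) M]
    [AddCommGroup A] [Module (ZMod p) A]
    (c : M →ₗ[ZMod p] A) (r : A →ₗ[ZMod p] M)
    (hrc : ∀ m : M, r (c m) = (sigma p - 1) ^ (p - 1) • m)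
    (hsurj : Function.Surjective c)
    (hker : LinearMap.ker c = LinearMap.range (smulMap p M (sigma p - 1)))
    (X : Submodule (Sp p) M) (hXtriv : ∀ x ∈ X, sigma p • x = x)
    (hXiso : Set.BijOn c X (LinearMap.ker r)) :
    ∃ Y : Submodule (Sp p) M, Module.Free (Sp p) Y ∧
      (∀ Z : Submodule (Sp p) M, Module.Free (Sp p) Z → Y ≤ Z → Y = Z) ∧
      IsCompl X Y ∧
      Module.rank (ZMod p) X = Module.rank (ZMod p) (LinearMap.ker r) ∧
      Module.rank (Sp p) Y = Module.rank (ZMod p) (A ⧸ LinearMap.ker r) := by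
  have hXt (x) (hx : x ∈ X) (m : M) (hxm : x = (sigma p - 1) • m) : x = 0 :=
    hXiso.injOn hx X.zero_mem <| by
      rw [map_zero, ← LinearMap.mem_ker, hker, hxm]
      exact LinearMap.mem_range_self _ m
  have hrange : LinearMap.range r = LinearMap.range (smulMap p M ((sigma p - 1) ^ (p - 1))) := by
    rw [← LinearMap.range_comp_of_range_eq_top r (LinearMap.range_eq_top.2 hsurj)]
    exact congrArg LinearMap.range (LinearMap.ext hrc)
  obtain ⟨Y, hYfree, hYrank, hY⟩ := exists_free_submodule_pow_pred_smul_eq (p := p) (M := M)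
  have hcompl : IsCompl X Y :=
    ⟨disjoint_of_free hXtriv hXt Y,
      codisjoint_of_forall_pow_pred_smul_eq
        (fun x hx => by rw [sub_smul, one_smul, hXtriv x hx, sub_self]) hY
        fun _ hm => exists_eq_add_sigma_sub_one_smul hrc hker hXiso.surjOn hm⟩
  refine ⟨Y, hYfree, fun Z _ hYZ => ?_, hcompl, ?_, ?_⟩
  · exact (le_iff_eq_of_codisjoint_of_disjoint hcompl.codisjoint.symm
      (disjoint_of_free hXtriv hXt Z)).1 hYZ
  · exact LinearMap.rank_eq_of_bijOn (P := X.restrictScalars (ZMod p)) hXiso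
  · rw [hYrank, (LinearMap.quotKerEquivRange r).rank_eq, hrange]

/-- Abstract structure theorem (Theorem 2): with `c = cor` surjective,
`r = res`, `r∘c = (σ-1)^(p-1)`, `ker c = (σ-1)M`, and a trivial submodule `X`
mapped isomorphically by `c` onto `ker r`, one has `M = X ⊕ Y` with `Y` a
maximal free `𝔽_p[H]`-submodule, `dim X = dim ker r`, and
`rank Y = dim (A / ker r)`. -/
theorem stmt15 (p : ℕ) [Fact p.Prime]
    (M A : Type u) [AddCommGroup M] [Module (Sp p) M]
    [Module (ZMod p) M] [IsScalarTower (ZMod p) (Sp p) M]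
    [AddCommGroup A] [Module (ZMod p) A]
    (c : M →ₗ[ZMod p] A) (r : A →ₗ[ZMod p] M)
    (hrc : ∀ m : M, r (c m) = (sigma p - 1) ^ (p - 1) • m)
    (hsurj : Function.Surjective c)
    (hker : LinearMap.ker c = LinearMap.range (smulMap p M (sigma p - 1)))
    (hcomm : ∀ m : M, c (sigma p • m) = c m)
    (X : Submodule (Sp p) M) (hXtriv : ∀ x ∈ X, sigma p • x = x)
    (hXiso : Set.BijOn c X (LinearMap.ker r)) :
    ∃ Y : Submodule (Sp p) M, Module.Free (Sp p) Y ∧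
      (∀ Z : Submodule (Sp p) M, Module.Free (Sp p) Z → Y ≤ Z → Y = Z) ∧
      IsCompl X Y ∧
      Module.rank (ZMod p) X = Module.rank (ZMod p) (LinearMap.ker r) ∧
      Module.rank (Sp p) Y = Module.rank (ZMod p) (A ⧸ LinearMap.ker r) :=
  stmt15_general p M A c r hrc hsurj hker X hXtriv hXiso
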